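/- Let d ≥ 5. For a simple random walk X on ℤ^d started at the origin, the probability that X(i) ever hits the trace of an independent simple random walk X' started at the origin satisfies P(X(i) ∈ X'[0,∞)) ≤ C · i^{(2-d)/2} for some constant C depending only on d. -/

import Mathlib

open MeasureTheory ProbabilityTheory

/-- The uniform step distribution of the simple random walk on `ℤ^d`:
uniform on the `2d` unit vectors `±e_i`. -/
noncomputable def stepPMF (d : ℕ) (hd : 0 < d) : PMF (Fin d → ℤ) :=
  PMF.uniformOfFinset
    ((Finset.univ.image fun i : Fin d => (Pi.single i 1 : Fin d → ℤ)) ∪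
      (Finset.univ.image fun i : Fin d => (Pi.single i (-1) : Fin d → ℤ)))
    ⟨Pi.single ⟨0, hd⟩ 1,
      Finset.mem_union_left _ (Finset.mem_image.mpr ⟨⟨0, hd⟩, Finset.mem_univ _, rfl⟩)⟩

/-- `X` is a simple random walk on `ℤ^d` started at `x₀`, under the measure `μ`:
`X 0 = x₀` a.s., and the increments are i.i.d. uniform on the `2d` unit vectors. -/
def IsSRW {Ω : Type*} [MeasurableSpace Ω] (μ : Measure Ω) {d : ℕ} (hd : 0 < d)
    (X : ℕ → Ω → (Fin d → ℤ)) (x₀ : Fin d → ℤ) : Prop :=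
  (∀ n, Measurable (X n)) ∧
  (∀ᵐ ω ∂μ, X 0 ω = x₀) ∧
  iIndepFun (fun n ω => X (n + 1) ω - X n ω) μ ∧
  ∀ n, μ.map (fun ω => X (n + 1) ω - X n ω) = (stepPMF d hd).toMeasure

/-! Writing `φ(θ) = d⁻¹ ∑ⱼ cos θⱼ` for the characteristic function of one step, independence
gives `E exp(i⟨θ, X' t - X i⟩) = φ(θ)^t φ(-θ)^i = φ(θ)^(t+i)`, so Fourier inversion on
`(-π, π]^d` yields `P(X' t = X i) = (2π)^(-d) ∫ φ(θ)^(t+i) dθ`. Since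
`|φ(θ)| ≤ ∏ⱼ exp (-(1 - |cos θⱼ|)/d)` and `1 - |cos u|` is bounded below by a quadratic around
the nearest of `0, ±π`, this integral is at most a Gaussian one, of order `(t + i)^(-d/2)`.
Summing over `t`, by comparison with `∑ k⁻²` when `d ≥ 4`, gives `i^(1 - d/2)`. -/

namespace SimpleRandomWalk

open Real
open Complex (I)

variable {d : ℕ}

def pairing (θ : Fin d → ℝ) (x : Fin d → ℤ) : ℝ := ∑ j, θ j * x j

lemma pairing_add (θ : Fin d → ℝ) (x y : Fin d → ℤ) :
    pairing θ (x + y) = pairing θ x + pairing θ y := by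
  simp only [pairing, Pi.add_apply, Int.cast_add, mul_add, Finset.sum_add_distrib]

lemma pairing_sub (θ : Fin d → ℝ) (x y : Fin d → ℤ) :
    pairing θ (x - y) = pairing θ x + pairing (-θ) y := by
  simp only [sub_eq_add_neg, pairing_add]
  simp [pairing, Finset.sum_neg_distrib]

@[simp] lemma pairing_zero (θ : Fin d → ℝ) : pairing θ 0 = 0 := by simp [pairing]

lemma pairing_single (θ : Fin d → ℝ) (j : Fin d) (c : ℤ) :
    pairing θ (Pi.single j c) = θ j * c := by
  rw [pairing, Finset.sum_eq_single j (fun k _ hk => by simp [hk]) (by simp)]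
  simp

lemma norm_exp_pairing_mul_I (θ : Fin d → ℝ) (x : Fin d → ℤ) :
    ‖Complex.exp (pairing θ x * I)‖ = 1 :=
  Complex.norm_exp_ofReal_mul_I _

noncomputable def stepCharFun (d : ℕ) (θ : Fin d → ℝ) : ℝ := (∑ j, cos (θ j)) / d

lemma stepCharFun_neg (θ : Fin d → ℝ) : stepCharFun d (-θ) = stepCharFun d θ := by
  simp [stepCharFun]

lemma abs_stepCharFun_le_one (θ : Fin d → ℝ) : |stepCharFun d θ| ≤ 1 := by
  rcases Nat.eq_zero_or_pos d with rfl | hd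
  · simp [stepCharFun]
  rw [stepCharFun, abs_div, Nat.abs_cast, div_le_one (by positivity)]
  calc |∑ j, cos (θ j)| ≤ ∑ j, |cos (θ j)| := Finset.abs_sum_le_sum_abs _ _
    _ ≤ ∑ _j : Fin d, (1 : ℝ) := Finset.sum_le_sum fun j _ => abs_cos_le_one _
    _ = d := by simp

def stepSet (d : ℕ) : Finset (Fin d → ℤ) :=
  (Finset.univ.image fun i : Fin d => (Pi.single i 1 : Fin d → ℤ)) ∪
    (Finset.univ.image fun i : Fin d => (Pi.single i (-1) : Fin d → ℤ))

lemma pi_single_injective {c : ℤ} (hc : c ≠ 0) :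
    Function.Injective fun i : Fin d => (Pi.single i c : Fin d → ℤ) := by
  intro i j h
  by_contra hij
  simpa [Pi.single_eq_of_ne hij, hc] using congrFun h i

lemma disjoint_stepSet :
    Disjoint (Finset.univ.image fun i : Fin d => (Pi.single i 1 : Fin d → ℤ))
      (Finset.univ.image fun i : Fin d => (Pi.single i (-1) : Fin d → ℤ)) := by
  simp only [Finset.disjoint_left, Finset.mem_image, Finset.mem_univ, true_and]
  rintro _ ⟨i, rfl⟩ ⟨j, hj⟩
  have := congrFun hj i
  by_cases hij : j = i
  · subst hij; simp at this
  · simp [Pi.single_eq_of_ne' hij] at this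

lemma sum_stepSet {M : Type*} [AddCommMonoid M] (f : (Fin d → ℤ) → M) :
    ∑ x ∈ stepSet d, f x = ∑ j, (f (Pi.single j 1) + f (Pi.single j (-1))) := by
  rw [stepSet, Finset.sum_union disjoint_stepSet,
    Finset.sum_image fun a _ b _ h => pi_single_injective one_ne_zero h,
    Finset.sum_image fun a _ b _ h => pi_single_injective (by norm_num) h,
    Finset.sum_add_distrib]

lemma card_stepSet : (stepSet d).card = 2 * d := by
  simpa [mul_comm] using sum_stepSet (d := d) (fun _ => (1 : ℕ))

lemma stepPMF_apply (hd : 0 < d) (x : Fin d → ℤ) :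
    stepPMF d hd x = if x ∈ stepSet d then ((2 * d : ℕ) : ENNReal)⁻¹ else 0 := by
  rw [show stepPMF d hd x = _ from PMF.uniformOfFinset_apply _ _, ← card_stepSet]
  congr

lemma integral_stepPMF {E : Type*} [NormedAddCommGroup E] [NormedSpace ℝ E] [CompleteSpace E]
    (hd : 0 < d) {f : (Fin d → ℤ) → E} (hf : Integrable f (stepPMF d hd).toMeasure) :
    ∫ x, f x ∂(stepPMF d hd).toMeasure
      = ((2 * d : ℕ) : ℝ)⁻¹ • ∑ j, (f (Pi.single j 1) + f (Pi.single j (-1))) := by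
  have hmem : ∀ j (c : ℤ), (c = 1 ∨ c = -1) → Pi.single j c ∈ stepSet d := by
    rintro j c (rfl | rfl) <;> simp [stepSet]
  rw [PMF.integral_eq_tsum _ _ hf,
    tsum_eq_sum (s := stepSet d) fun x hx => by simp [stepPMF_apply, hx], sum_stepSet,
    Finset.smul_sum]
  simp [stepPMF_apply, hmem _ _ (.inl rfl), hmem _ _ (.inr rfl)]

lemma integral_stepPMF_exp_pairing (hd : 0 < d) (θ : Fin d → ℝ) :
    ∫ x, Complex.exp (pairing θ x * I) ∂(stepPMF d hd).toMeasure = stepCharFun d θ := by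
  have hcos : ∀ t : ℝ, Complex.exp (t * I) + Complex.exp (-t * I) = 2 * (cos t : ℂ) := by
    intro t; rw [Complex.ofReal_cos, Complex.cos]; ring_nf
  rw [integral_stepPMF hd (.of_bound (measurable_of_countable _).aestronglyMeasurable 1
    (.of_forall fun x => (norm_exp_pairing_mul_I θ x).le))]
  simp only [pairing_single, Int.cast_one, Int.cast_neg, mul_one, mul_neg, Complex.ofReal_neg,
    hcos, ← Finset.mul_sum, stepCharFun, Complex.real_smul]
  push_cast
  field_simp

section Walk

variable {Ω : Type*} [MeasurableSpace Ω] {μ : Measure Ω} {hd : 0 < d}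
  {X X' : ℕ → Ω → (Fin d → ℤ)}

lemma _root_.IsSRW.measurable_increment {x₀ : Fin d → ℤ} (hX : IsSRW μ hd X x₀) (n : ℕ) :
    Measurable fun ω => X (n + 1) ω - X n ω :=
  (hX.1 (n + 1)).sub (hX.1 n)

lemma _root_.IsSRW.indepFun_increment (hX : IsSRW μ hd X 0) (n : ℕ) :
    IndepFun (X n) (fun ω => X (n + 1) ω - X n ω) μ := by
  refine (hX.2.2.1.indepFun_sum_range_succ hX.measurable_increment n).congr ?_ .rfl
  filter_upwards [hX.2.1] with ω hω
  simp [Finset.sum_apply, Finset.sum_range_sub (X · ω), hω]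

lemma _root_.IsSRW.integral_exp_pairing [IsProbabilityMeasure μ] (hX : IsSRW μ hd X 0)
    (θ : Fin d → ℝ) (n : ℕ) :
    ∫ ω, Complex.exp (pairing θ (X n ω) * I) ∂μ = stepCharFun d θ ^ n := by
  induction n with
  | zero =>
    rw [integral_congr_ae (g := fun _ => 1) (by filter_upwards [hX.2.1] with ω hω; simp [hω])]
    simp
  | succ n ih =>
    have hsplit : ∀ ω, Complex.exp (pairing θ (X (n + 1) ω) * I)
        = Complex.exp (pairing θ (X n ω) * I)
          * Complex.exp (pairing θ (X (n + 1) ω - X n ω) * I) := by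
      intro ω
      rw [← Complex.exp_add, ← add_mul, ← Complex.ofReal_add, ← pairing_add, add_sub_cancel]
    simp_rw [hsplit]
    rw [(hX.indepFun_increment n).integral_fun_comp_mul_comp
        (f := fun x => Complex.exp (pairing θ x * I)) (g := fun x => Complex.exp (pairing θ x * I))
        (hX.1 n).aemeasurable
        (hX.measurable_increment n).aemeasurable
        (measurable_of_countable _).aestronglyMeasurable
        (measurable_of_countable _).aestronglyMeasurable, ih,
      ← integral_map (f := fun x => Complex.exp (pairing θ x * I))
        (hX.measurable_increment n).aemeasurable (measurable_of_countable _).aestronglyMeasurable,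
      hX.2.2.2 n, integral_stepPMF_exp_pairing, pow_succ]

theorem integral_exp_pairing_sub [IsProbabilityMeasure μ] (hX : IsSRW μ hd X 0)
    (hX' : IsSRW μ hd X' 0) (hXX' : IndepFun (fun ω n => X n ω) (fun ω n => X' n ω) μ)
    (θ : Fin d → ℝ) (t i : ℕ) :
    ∫ ω, Complex.exp (pairing θ (X' t ω - X i ω) * I) ∂μ = stepCharFun d θ ^ (t + i) := by
  have hindep : IndepFun (X' t) (X i) μ :=
    hXX'.symm.comp (measurable_pi_apply t) (measurable_pi_apply i)
  simp_rw [pairing_sub, Complex.ofReal_add, add_mul, Complex.exp_add]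
  rw [hindep.integral_fun_comp_mul_comp (f := fun x => Complex.exp (pairing θ x * I))
      (g := fun x => Complex.exp (pairing (-θ) x * I)) (hX'.1 t).aemeasurable (hX.1 i).aemeasurable
      (measurable_of_countable _).aestronglyMeasurable
      (measurable_of_countable _).aestronglyMeasurable,
    hX'.integral_exp_pairing, hX.integral_exp_pairing, stepCharFun_neg, pow_add]

end Walk

noncomputable def torusMeasure (d : ℕ) : Measure (Fin d → ℝ) :=
  Measure.pi fun _ => volume.restrict (Set.Ioc (-π) π)

instance : IsFiniteMeasure (torusMeasure d) := by
  unfold torusMeasure; infer_instance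

lemma setIntegral_exp_mul_int_mul_I (m : ℤ) :
    ∫ t in Set.Ioc (-π) π, Complex.exp (t * m * I) = if m = 0 then (2 * π : ℂ) else 0 := by
  rw [← intervalIntegral.integral_of_le (by linarith [pi_pos])]
  split_ifs with hm
  · simp [hm]; ring
  · have hc : (m * I : ℂ) ≠ 0 := mul_ne_zero (by exact_mod_cast hm) Complex.I_ne_zero
    simp_rw [mul_assoc, mul_comm _ (m * I : ℂ)]
    rw [integral_exp_mul_complex hc, div_eq_zero_iff, sub_eq_zero,
      Complex.exp_eq_exp_iff_exists_int]
    exact .inl ⟨m, by push_cast; ring⟩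

lemma integral_torusMeasure_exp_pairing (k : Fin d → ℤ) :
    ∫ θ, Complex.exp (pairing θ k * I) ∂torusMeasure d = if k = 0 then (2 * π : ℂ) ^ d else 0 := by
  have hprod : ∀ θ : Fin d → ℝ,
      Complex.exp (pairing θ k * I) = ∏ j, Complex.exp (θ j * k j * I) := by
    intro θ
    rw [← Complex.exp_sum, pairing]
    push_cast
    rw [Finset.sum_mul]
  simp_rw [hprod]
  rw [torusMeasure, integral_fintype_prod_eq_prod (f := fun j (t : ℝ) => Complex.exp (t * k j * I))]
  simp_rw [setIntegral_exp_mul_int_mul_I]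
  split_ifs with hk
  · simp [hk]
  · obtain ⟨j, hj⟩ := Function.ne_iff.mp hk
    exact Finset.prod_eq_zero (Finset.mem_univ j) (if_neg hj)

section Inversion

variable {Ω : Type*} [MeasurableSpace Ω] {μ : Measure Ω} [IsProbabilityMeasure μ]

theorem integral_torusMeasure_integral_exp_pairing {Y : Ω → Fin d → ℤ} (hY : Measurable Y) :
    ∫ θ, ∫ ω, Complex.exp (pairing θ (Y ω) * I) ∂μ ∂torusMeasure d
      = (2 * π : ℂ) ^ d * μ.real {ω | Y ω = 0} := by
  have hmeas : Measurable fun p : (Fin d → ℝ) × (Fin d → ℤ) =>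
      Complex.exp (pairing p.1 p.2 * I) :=
    measurable_from_prod_countable_left fun x => by unfold pairing; fun_prop
  have hint : Integrable (Function.uncurry fun θ ω => Complex.exp (pairing θ (Y ω) * I))
      ((torusMeasure d).prod μ) :=
    .of_bound (hmeas.comp (measurable_fst.prodMk (hY.comp measurable_snd))).aestronglyMeasurable
      1 (.of_forall fun _ => (norm_exp_pairing_mul_I _ _).le)
  rw [integral_integral_swap hint]
  simp_rw [integral_torusMeasure_exp_pairing]
  rw [integral_congr_ae (g := {ω | Y ω = 0}.indicator fun _ => (2 * π : ℂ) ^ d)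
      (.of_forall fun ω => by simp [Set.indicator_apply]),
    integral_indicator_const (μ := μ) _ (s := {ω | Y ω = 0}) (hY (measurableSet_singleton 0)),
    Complex.real_smul,
    mul_comm]

end Inversion

lemma exp_neg_mul_one_sub_abs_cos_le {a t : ℝ} (ha : 0 ≤ a) (ht : t ∈ Set.Icc (-π) π) :
    exp (-(a * (1 - |cos t|))) ≤ exp (-(2 * a / π ^ 2) * t ^ 2)
      + exp (-(2 * a / π ^ 2) * (t - π) ^ 2) + exp (-(2 * a / π ^ 2) * (t + π) ^ 2) := by
  have key : ∀ u, |u| ≤ π → |cos t| = cos u →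
      exp (-(a * (1 - |cos t|))) ≤ exp (-(2 * a / π ^ 2) * u ^ 2) := by
    intro u hu hcos
    have h := cos_le_one_sub_mul_cos_sq hu
    have := mul_le_mul_of_nonneg_left (show 2 / π ^ 2 * u ^ 2 ≤ 1 - cos u by linarith) ha
    rw [exp_le_exp, hcos]
    linear_combination this
  obtain ⟨ht₁, ht₂⟩ := ht
  rcases le_total 0 (cos t) with hc | hc
  · have := key t (abs_le.mpr ⟨ht₁, ht₂⟩) (abs_of_nonneg hc)
    linarith [exp_pos (-(2 * a / π ^ 2) * (t - π) ^ 2), exp_pos (-(2 * a / π ^ 2) * (t + π) ^ 2)]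
  rcases le_total 0 t with h0 | h0
  · have := key (t - π) (abs_le.mpr ⟨by linarith, by linarith [pi_pos]⟩)
      (by rw [abs_of_nonpos hc, cos_sub_pi])
    linarith [exp_pos (-(2 * a / π ^ 2) * t ^ 2), exp_pos (-(2 * a / π ^ 2) * (t + π) ^ 2)]
  · have := key (t + π) (abs_le.mpr ⟨by linarith [pi_pos], by linarith⟩)
      (by rw [abs_of_nonpos hc, cos_add_pi])
    linarith [exp_pos (-(2 * a / π ^ 2) * t ^ 2), exp_pos (-(2 * a / π ^ 2) * (t - π) ^ 2)]

lemma setIntegral_exp_neg_mul_one_sub_abs_cos_le {a : ℝ} (ha : 0 < a) :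
    ∫ t in Set.Ioc (-π) π, exp (-(a * (1 - |cos t|))) ≤ 3 * √(π ^ 3 / (2 * a)) := by
  set b := 2 * a / π ^ 2
  have hb : 0 < b := by positivity
  have hg : Integrable fun t : ℝ => exp (-b * t ^ 2) := integrable_exp_neg_mul_sq hb
  have hg₁ : Integrable fun t : ℝ => exp (-b * (t - π) ^ 2) := hg.comp_sub_right π
  have hg₂ : Integrable fun t : ℝ => exp (-b * (t + π) ^ 2) := by
    simpa using hg.comp_sub_right (-π)
  have hshift : ∀ c, ∫ t, exp (-b * (t - c) ^ 2) = √(π / b) := fun c => by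
    rw [integral_sub_right_eq_self (fun t => exp (-b * t ^ 2)), integral_gaussian]
  have hshift' : ∫ t, exp (-b * (t + π) ^ 2) = √(π / b) := by
    simpa using hshift (-π)
  calc ∫ t in Set.Ioc (-π) π, exp (-(a * (1 - |cos t|)))
      ≤ ∫ t in Set.Ioc (-π) π, (exp (-b * t ^ 2) + exp (-b * (t - π) ^ 2)
          + exp (-b * (t + π) ^ 2)) :=
        setIntegral_mono_on (Continuous.integrableOn_Ioc (by fun_prop))
          ((hg.add hg₁).add hg₂).integrableOn measurableSet_Ioc
          fun t ht => exp_neg_mul_one_sub_abs_cos_le ha.le (Set.Ioc_subset_Icc_self ht)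
    _ ≤ ∫ t, (exp (-b * t ^ 2) + exp (-b * (t - π) ^ 2) + exp (-b * (t + π) ^ 2)) :=
        setIntegral_le_integral ((hg.add hg₁).add hg₂) (.of_forall fun t => by positivity)
    _ = 3 * √(π / b) := by
        rw [integral_add (f := fun t => exp (-b * t ^ 2) + exp (-b * (t - π) ^ 2)) (hg.add hg₁) hg₂,
          integral_add hg hg₁, hshift π, hshift', integral_gaussian]
        ring
    _ = 3 * √(π ^ 3 / (2 * a)) := by
        congr 2
        simp only [b]
        field_simp

lemma abs_stepCharFun_pow_le (hd : 0 < d) (θ : Fin d → ℝ) (m : ℕ) :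
    |stepCharFun d θ| ^ m ≤ ∏ j, exp (-(m / d * (1 - |cos (θ j)|))) := by
  have hd' : (0 : ℝ) < d := by exact_mod_cast hd
  have habs : |stepCharFun d θ| ≤ exp (-((∑ j, (1 - |cos (θ j)|)) / d)) :=
    calc |stepCharFun d θ| ≤ (∑ j, |cos (θ j)|) / d := by
          rw [stepCharFun, abs_div, Nat.abs_cast]
          gcongr
          exact Finset.abs_sum_le_sum_abs _ _
      _ = 1 - (∑ j, (1 - |cos (θ j)|)) / d := by
          simp only [Finset.sum_sub_distrib, Finset.sum_const, Finset.card_univ, Fintype.card_fin,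
            nsmul_eq_mul, mul_one]
          field_simp
          ring
      _ ≤ exp (-((∑ j, (1 - |cos (θ j)|)) / d)) := by
          rw [sub_eq_neg_add]
          exact add_one_le_exp _
  calc |stepCharFun d θ| ^ m ≤ exp (-((∑ j, (1 - |cos (θ j)|)) / d)) ^ m :=
        pow_le_pow_left₀ (abs_nonneg _) habs m
    _ = ∏ j, exp (-(m / d * (1 - |cos (θ j)|))) := by
        rw [← exp_nat_mul, ← exp_sum, Finset.sum_neg_distrib, ← Finset.mul_sum]
        ring_nf

lemma integral_torusMeasure_stepCharFun_pow_le (hd : 0 < d) {m : ℕ} (hm : 0 < m) :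
    ∫ θ, stepCharFun d θ ^ m ∂torusMeasure d ≤ (3 * √(π ^ 3 * d / (2 * m))) ^ d := by
  have hφ : Measurable (stepCharFun d) := by unfold stepCharFun; fun_prop
  have hw : Integrable (fun t : ℝ => exp (-(m / d * (1 - |cos t|))))
      (volume.restrict (Set.Ioc (-π) π)) :=
    Continuous.integrableOn_Ioc (by fun_prop)
  calc ∫ θ, stepCharFun d θ ^ m ∂torusMeasure d
      ≤ ∫ θ, ∏ j, exp (-(m / d * (1 - |cos (θ j)|))) ∂torusMeasure d :=
        integral_mono
          (.of_bound (hφ.pow_const m).aestronglyMeasurable 1 (.of_forall fun θ => by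
            simpa [abs_pow] using pow_le_one₀ (abs_nonneg _) (abs_stepCharFun_le_one θ)))
          (Integrable.fintype_prod (f := fun _ t => exp (-(m / d * (1 - |cos t|)))) fun _ => hw)
          fun θ => (le_abs_self _).trans (by rw [abs_pow]; exact abs_stepCharFun_pow_le hd θ m)
    _ = (∫ t in Set.Ioc (-π) π, exp (-(m / d * (1 - |cos t|)))) ^ d := by
        rw [torusMeasure, integral_fintype_prod_eq_pow (fun t => exp (-(m / d * (1 - |cos t|)))),
          Fintype.card_fin]
    _ ≤ (3 * √(π ^ 3 * d / (2 * m))) ^ d := by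
        refine pow_le_pow_left₀ (setIntegral_nonneg measurableSet_Ioc fun t _ => (exp_pos _).le)
          ?_ d
        refine (setIntegral_exp_neg_mul_one_sub_abs_cos_le (a := m / d) (by positivity)).trans_eq ?_
        rw [← mul_div_assoc, div_div_eq_mul_div]

section LocalBound

variable {Ω : Type*} [MeasurableSpace Ω] {μ : Measure Ω} [IsProbabilityMeasure μ]

theorem measureReal_eq_zero_le_of_integral_exp_pairing (hd : 0 < d) {Y : Ω → Fin d → ℤ}
    (hY : Measurable Y) {m : ℕ} (hm : 0 < m)
    (hYchar : ∀ θ, ∫ ω, Complex.exp (pairing θ (Y ω) * I) ∂μ = stepCharFun d θ ^ m) :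
    μ.real {ω | Y ω = 0} ≤ (3 / 2 * √(π * d / 2)) ^ d * (m : ℝ) ^ (-((d : ℝ) / 2)) := by
  have hinv : (2 * π) ^ d * μ.real {ω | Y ω = 0} = ∫ θ, stepCharFun d θ ^ m ∂torusMeasure d := by
    have h := integral_torusMeasure_integral_exp_pairing (μ := μ) hY
    simp only [hYchar, ← Complex.ofReal_pow] at h
    rw [integral_complex_ofReal] at h
    exact_mod_cast h.symm
  have hm' : (0 : ℝ) < m := by exact_mod_cast hm
  have hsqrt : √(π ^ 3 * d / (2 * m)) = π * √(π * d / 2) / √m := by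
    rw [show π ^ 3 * d / (2 * m) = π ^ 2 * (π * d / 2) / m by ring, sqrt_div' _ hm'.le,
      sqrt_mul' _ (by positivity), sqrt_sq pi_pos.le]
  have hrpow : (m : ℝ) ^ (-((d : ℝ) / 2)) = (√m ^ d)⁻¹ := by
    rw [sqrt_eq_rpow, ← rpow_natCast, ← rpow_mul hm'.le, ← rpow_neg hm'.le]
    ring_nf
  calc μ.real {ω | Y ω = 0} = (∫ θ, stepCharFun d θ ^ m ∂torusMeasure d) / (2 * π) ^ d := by
        rw [← hinv, mul_div_cancel_left₀ _ (by positivity)]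
    _ ≤ (3 * √(π ^ 3 * d / (2 * m))) ^ d / (2 * π) ^ d := by
        gcongr
        exact integral_torusMeasure_stepCharFun_pow_le hd hm
    _ = (3 / 2 * √(π * d / 2)) ^ d * (m : ℝ) ^ (-((d : ℝ) / 2)) := by
        rw [hsqrt, hrpow, ← inv_pow, ← div_pow, ← mul_pow]
        congr 1
        field_simp

end LocalBound

lemma summable_natCast_add_rpow_neg {s : ℝ} (hs : 1 < s) (i : ℕ) :
    Summable fun t : ℕ => ((t + i : ℕ) : ℝ) ^ (-s) :=
  (summable_nat_add_iff i).mpr (Real.summable_nat_rpow.mpr (by linarith))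

lemma tsum_natCast_add_rpow_neg_le {s : ℝ} (hs : 2 ≤ s) {i : ℕ} (hi : 1 ≤ i) :
    ∑' t : ℕ, ((t + i : ℕ) : ℝ) ^ (-s) ≤ 2 * (i : ℝ) ^ (1 - s) := by
  have hi' : (0 : ℝ) < i := by exact_mod_cast hi
  have hterm : ∀ t : ℕ,
      ((t + i : ℕ) : ℝ) ^ (-s) ≤ (i : ℝ) ^ (2 - s) * (((t + i : ℕ) : ℝ) ^ 2)⁻¹ := by
    intro t
    have hle : (i : ℝ) ≤ (t + i : ℕ) := by exact_mod_cast Nat.le_add_left i t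
    have hpos : (0 : ℝ) < (t + i : ℕ) := hi'.trans_le hle
    rw [show -s = (2 - s) + (-2 : ℤ) by push_cast; ring, rpow_add hpos, rpow_intCast, zpow_neg,
      zpow_ofNat]
    exact mul_le_mul_of_nonneg_right (rpow_le_rpow_of_nonpos hi' hle (by linarith)) (by positivity)
  obtain ⟨j, rfl⟩ : ∃ j, i = j + 1 := ⟨i - 1, by omega⟩
  refine tsum_le_of_sum_range_le (fun t => by positivity) fun n => ?_
  calc ∑ t ∈ Finset.range n, ((t + (j + 1) : ℕ) : ℝ) ^ (-s)
      ≤ ∑ t ∈ Finset.range n, ((j + 1 : ℕ) : ℝ) ^ (2 - s) * (((t + (j + 1) : ℕ) : ℝ) ^ 2)⁻¹ :=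
        Finset.sum_le_sum fun t _ => hterm t
    _ = ((j + 1 : ℕ) : ℝ) ^ (2 - s) * ∑ k ∈ Finset.Ioo j (n + (j + 1)), ((k : ℝ) ^ 2)⁻¹ := by
        rw [← Finset.mul_sum, Finset.range_eq_Ico,
          Finset.sum_Ico_add' (fun k : ℕ => ((k : ℝ) ^ 2)⁻¹), zero_add, ← Finset.Ico_succ_left_eq_Ioo, Order.succ_eq_add_one]
    _ ≤ ((j + 1 : ℕ) : ℝ) ^ (2 - s) * (2 / (j + 1)) := by
        gcongr
        exact sum_Ioo_inv_sq_le j _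
    _ = 2 * ((j + 1 : ℕ) : ℝ) ^ (1 - s) := by
        rw [show (2 : ℝ) - s = (1 - s) + 1 by ring, rpow_add_one hi'.ne']
        push_cast
        field_simp

lemma measureReal_iUnion_le_tsum {α ι : Type*} [MeasurableSpace α] [Countable ι] {μ : Measure α}
    [IsFiniteMeasure μ] {s : ι → Set α} {p : ι → ℝ} (hp : Summable p)
    (h : ∀ t, μ.real (s t) ≤ p t) : μ.real (⋃ t, s t) ≤ ∑' t, p t := by
  have hp₀ : ∀ t, 0 ≤ p t := fun t => measureReal_nonneg.trans (h t)
  refine ENNReal.toReal_le_of_le_ofReal (tsum_nonneg hp₀) ?_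
  calc μ (⋃ t, s t) ≤ ∑' t, μ (s t) := measure_iUnion_le _
    _ ≤ ∑' t, ENNReal.ofReal (p t) := ENNReal.tsum_le_tsum fun t =>
        (ENNReal.le_ofReal_iff_toReal_le (measure_ne_top _ _) (hp₀ t)).2 (h t)
    _ = ENNReal.ofReal (∑' t, p t) := (ENNReal.ofReal_tsum_of_nonneg hp₀ hp).symm

end SimpleRandomWalk

open SimpleRandomWalk Real

/-- for independent simple random walks `X, X'` on `ℤ^d` (`d ≥ 5`) started at
the origin, `P(X i ∈ X'[0,∞)) ≤ C · i^{(2-d)/2}` with `C` depending only on `d`. -/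
theorem hit_range_prob_le (d : ℕ) (hd : 5 ≤ d) :
    ∃ C : ℝ, 0 < C ∧
      ∀ (Ω : Type) [MeasurableSpace Ω] (μ : Measure Ω) [IsProbabilityMeasure μ]
        (X X' : ℕ → Ω → (Fin d → ℤ)),
        IsSRW μ (by omega) X 0 → IsSRW μ (by omega) X' 0 →
        IndepFun (fun ω n => X n ω) (fun ω n => X' n ω) μ →
        ∀ i : ℕ, 1 ≤ i →
          (μ {ω | ∃ t : ℕ, X' t ω = X i ω}).toReal ≤ C * (i : ℝ) ^ (((2 : ℝ) - d) / 2) := by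
  set K := (3 / 2 * √(π * d / 2)) ^ d
  refine ⟨2 * K, by positivity, fun Ω _ μ _ X X' hX hX' hXX' i hi => ?_⟩
  have hs : (2 : ℝ) ≤ d / 2 := by
    rw [le_div_iff₀ two_pos]; exact_mod_cast (by omega : 4 ≤ d)
  have hmeet : ∀ t, μ.real {ω | X' t ω = X i ω} ≤ K * ((t + i : ℕ) : ℝ) ^ (-((d : ℝ) / 2)) :=
    fun t => by
      have h := measureReal_eq_zero_le_of_integral_exp_pairing (by omega)
        ((hX'.1 t).sub (hX.1 i)) (by omega) (integral_exp_pairing_sub hX hX' hXX' · t i)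
      simpa only [Pi.sub_apply, sub_eq_zero] using h
  calc (μ {ω | ∃ t, X' t ω = X i ω}).toReal = μ.real (⋃ t, {ω | X' t ω = X i ω}) := by
        rw [measureReal_def, Set.ofPred_exists]
    _ ≤ ∑' t, K * ((t + i : ℕ) : ℝ) ^ (-((d : ℝ) / 2)) :=
        measureReal_iUnion_le_tsum
          ((summable_natCast_add_rpow_neg (by linarith) i).mul_left K) hmeet
    _ ≤ K * (2 * (i : ℝ) ^ (1 - (d : ℝ) / 2)) := by
        rw [tsum_mul_left]
        gcongr
        exact tsum_natCast_add_rpow_neg_le hs hi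
    _ = 2 * K * (i : ℝ) ^ (((2 : ℝ) - d) / 2) := by
        rw [show (1 : ℝ) - d / 2 = (2 - d) / 2 by ring]
        ring
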